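/- In the fixed-design model, assume σ_k(A) > σ_{k+1}(A), let R ∈ ℝ^{d×s} with s ≥ k and rank(AR) ≥ k, and suppose d₂(U_{AR,k}, U_{A,k}) ≤ ν < 1. Then the excess risk satisfies 𝔈(x_{R,k}) ≤ 𝔈(x_k) + (2ν + ν²)·‖f‖₂²/n. -/

import Mathlib

open Matrix MeasureTheory

noncomputable section

/-- Euclidean norm of a vector in `ℝ^n`. -/
def vnorm {n : ℕ} (v : Fin n → ℝ) : ℝ := Real.sqrt (∑ i, v i ^ 2)

/-- Spectral norm of a matrix (operator norm as a map between Euclidean spaces). -/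
def spec {m n : ℕ} (M : Matrix (Fin m) (Fin n) ℝ) : ℝ :=
  ‖LinearMap.toContinuousLinearMap (Matrix.toEuclideanLin M)‖

/-- The four Moore-Penrose conditions. -/
def IsMP {m n : ℕ} (X : Matrix (Fin m) (Fin n) ℝ) (Y : Matrix (Fin n) (Fin m) ℝ) : Prop :=
  X * Y * X = X ∧ Y * X * Y = Y ∧ (X * Y)ᵀ = X * Y ∧ (Y * X)ᵀ = Y * X

/-- The Moore-Penrose pseudoinverse (it always exists and is unique, so this choice-based
definition picks out exactly the Moore-Penrose pseudoinverse). -/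
def pinv {m n : ℕ} (X : Matrix (Fin m) (Fin n) ℝ) : Matrix (Fin n) (Fin m) ℝ := by
  classical exact if h : ∃ Y, IsMP X Y then h.choose else 0

/-- Orthogonal projection onto the column space of a matrix: `P_X = X X⁺`. -/
def projCol {m n : ℕ} (X : Matrix (Fin m) (Fin n) ℝ) : Matrix (Fin m) (Fin m) ℝ := X * pinv X

/-- Distance between column spaces: `d₂(U, W) = ‖P_U - P_W‖₂`. -/
def d2 {m p q : ℕ} (U : Matrix (Fin m) (Fin p) ℝ) (W : Matrix (Fin m) (Fin q) ℝ) : ℝ :=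
  spec (projCol U - projCol W)

/-- `(U, s, V)` is a thin SVD of `X`: orthonormal columns, nonincreasing nonnegative
singular values, and `X = U (diag s) Vᵀ`. -/
def IsThinSVD {m n p : ℕ} (X : Matrix (Fin m) (Fin n) ℝ) (U : Matrix (Fin m) (Fin p) ℝ)
    (s : Fin p → ℝ) (V : Matrix (Fin n) (Fin p) ℝ) : Prop :=
  Uᵀ * U = 1 ∧ Vᵀ * V = 1 ∧ Antitone s ∧ (∀ i, 0 ≤ s i) ∧ X = U * Matrix.diagonal s * Vᵀ

/-- The matrix of the first `k` columns. -/
def firstCols {m p : ℕ} (U : Matrix (Fin m) (Fin p) ℝ) (k : ℕ) (h : k ≤ p) :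
    Matrix (Fin m) (Fin k) ℝ := U.submatrix id (Fin.castLE h)

/-- The matrix of the remaining columns (columns `k+1, …, p` in 1-based indexing). -/
def tailCols {m p : ℕ} (U : Matrix (Fin m) (Fin p) ℝ) (k : ℕ) (h : k ≤ p) :
    Matrix (Fin m) (Fin (p - k)) ℝ :=
  U.submatrix id (fun j => ⟨k + j.1, by have := j.2; omega⟩)

/-- `sv s i` is the `i`-th singular value (1-indexed), `0` past the end. -/
def sv {p : ℕ} (s : Fin p → ℝ) (i : ℕ) : ℝ := by
  classical exact if h : i - 1 < p then s ⟨i - 1, h⟩ else 0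

/-!
Under the rank assumptions both estimators predict through orthogonal projections of rank `k`:
`A x_k = P b` and `A x_{R,k} = Q b` with `P = U_{A,k} U_{A,k}ᵀ` and `Q = U_{AR,k} U_{AR,k}ᵀ`,
whose ranges lie in that of `A`. With `g = P_A f`, each excess risk is therefore a bias term
`‖P g - g‖²` (resp. `‖Q g - g‖²`) plus the same variance `k σ²`, and the bias terms are compared
through `Q g - g = (P g - g) + (Q - P) g`, using `‖Q - P‖₂ ≤ ν` and `‖P g - g‖ ≤ ‖g‖ ≤ ‖f‖`.
-/

theorem isStarProjection_iff_transpose {n : ℕ} {P : Matrix (Fin n) (Fin n) ℝ} :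
    IsStarProjection P ↔ P * P = P ∧ Pᵀ = P := by
  rw [isStarProjection_iff', star_eq_conjTranspose, conjTranspose_eq_transpose_of_trivial]

theorem IsStarProjection.transpose_mul_self {n : ℕ} {P : Matrix (Fin n) (Fin n) ℝ}
    (hP : IsStarProjection P) : Pᵀ * P = P := by
  obtain ⟨hidem, hsymm⟩ := isStarProjection_iff_transpose.mp hP
  rw [hsymm, hidem]

namespace IsMP

variable {m n : ℕ} {X : Matrix (Fin m) (Fin n) ℝ} {Y : Matrix (Fin n) (Fin m) ℝ}

theorem unique {Z : Matrix (Fin n) (Fin m) ℝ} (hY : IsMP X Y) (hZ : IsMP X Z) : Y = Z := by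
  obtain ⟨hY1, hY2, hY3, hY4⟩ := hY
  obtain ⟨hZ1, hZ2, hZ3, hZ4⟩ := hZ
  have hXY : X * Y = X * Z := calc
    X * Y = X * Y * (X * Z) := by
      rw [← hY3, ← hZ3, ← Matrix.transpose_mul, ← Matrix.mul_assoc, Matrix.mul_assoc X Z X,
        ← Matrix.mul_assoc, hZ1, hY3]
    _ = X * Z := by rw [← Matrix.mul_assoc, Matrix.mul_assoc X Y X, ← Matrix.mul_assoc, hY1]
  have hYX : Y * X = Z * X := calc
    Y * X = Z * X * (Y * X) := by
      rw [← hZ4, ← hY4, ← Matrix.transpose_mul, Matrix.mul_assoc, ← Matrix.mul_assoc X Z X,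
        hZ1, hY4]
    _ = Z * X := by rw [Matrix.mul_assoc, ← Matrix.mul_assoc X Y X, hY1]
  calc Y = Y * X * Y := hY2.symm
    _ = Z * X * Z := by rw [Matrix.mul_assoc, hXY, ← Matrix.mul_assoc, hYX]
    _ = Z := hZ2

theorem pinv_eq (h : IsMP X Y) : pinv X = Y := by
  have hex : ∃ Y, IsMP X Y := ⟨Y, h⟩
  rw [pinv, dif_pos hex]
  exact hex.choose_spec.unique h

theorem isMP_pinv (h : IsMP X Y) : IsMP X (pinv X) := h.pinv_eq ▸ h

theorem isStarProjection (h : IsMP X Y) : IsStarProjection (X * Y) :=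
  isStarProjection_iff_transpose.mpr ⟨by rw [← Matrix.mul_assoc, h.1], h.2.2.1⟩

theorem mul_transpose_mul_eq (h : IsMP X Y) {k : ℕ} {U : Matrix (Fin m) (Fin k) ℝ}
    {Z : Matrix (Fin n) (Fin k) ℝ} (hU : U = X * Z) : U * Uᵀ * (X * Y) = U * Uᵀ := by
  have hproj : Uᵀ * (X * Y) = Uᵀ := calc
    Uᵀ * (X * Y) = Zᵀ * (Xᵀ * (X * Y)ᵀ) := by
      rw [h.2.2.1, hU, Matrix.transpose_mul, Matrix.mul_assoc]
    _ = Zᵀ * (X * Y * X)ᵀ := by rw [Matrix.transpose_mul (X * Y) X]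
    _ = Uᵀ := by rw [h.1, hU, Matrix.transpose_mul]
  rw [Matrix.mul_assoc, hproj]

theorem orthonormal_mul_mul_transpose {p q k l : ℕ} {M : Matrix (Fin p) (Fin q) ℝ}
    {N : Matrix (Fin q) (Fin p) ℝ} (h : IsMP M N) {U : Matrix (Fin k) (Fin p) ℝ}
    {V : Matrix (Fin l) (Fin q) ℝ} (hU : Uᵀ * U = 1) (hV : Vᵀ * V = 1) :
    IsMP (U * M * Vᵀ) (V * N * Uᵀ) := by
  obtain ⟨h1, h2, h3, h4⟩ := h
  have hU' : ∀ {r : ℕ} (W : Matrix (Fin p) (Fin r) ℝ), Uᵀ * (U * W) = W := fun W => by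
    rw [← Matrix.mul_assoc, hU, Matrix.one_mul]
  have hV' : ∀ {r : ℕ} (W : Matrix (Fin q) (Fin r) ℝ), Vᵀ * (V * W) = W := fun W => by
    rw [← Matrix.mul_assoc, hV, Matrix.one_mul]
  have h1' : ∀ {r : ℕ} (W : Matrix (Fin q) (Fin r) ℝ), M * (N * (M * W)) = M * W := fun W => by
    rw [← Matrix.mul_assoc, ← Matrix.mul_assoc, h1]
  have h2' : ∀ {r : ℕ} (W : Matrix (Fin p) (Fin r) ℝ), N * (M * (N * W)) = N * W := fun W => by
    rw [← Matrix.mul_assoc, ← Matrix.mul_assoc, h2]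
  refine ⟨?_, ?_, ?_, ?_⟩
  · simp only [Matrix.mul_assoc, hU', hV', h1']
  · simp only [Matrix.mul_assoc, hU', hV', h2']
  · simp only [Matrix.mul_assoc, hV', Matrix.transpose_mul, Matrix.transpose_transpose]
    rw [← Matrix.mul_assoc Nᵀ, ← Matrix.transpose_mul, h3, Matrix.mul_assoc]
  · simp only [Matrix.mul_assoc, hU', Matrix.transpose_mul, Matrix.transpose_transpose]
    rw [← Matrix.mul_assoc Mᵀ, ← Matrix.transpose_mul, h4, Matrix.mul_assoc]

end IsMP

theorem isMP_diagonal_inv {p : ℕ} (d : Fin p → ℝ) : IsMP (diagonal d) (diagonal d⁻¹) := by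
  refine ⟨?_, ?_, ?_, ?_⟩ <;>
    simp only [diagonal_mul_diagonal, diagonal_transpose] <;>
    congr 1 <;> funext i <;> simp only [Pi.inv_apply]
  · exact mul_inv_mul_cancel (d i)
  · simpa using mul_inv_mul_cancel (d i)⁻¹

theorem isMP_transpose_of_orthonormal {m k : ℕ} {U : Matrix (Fin m) (Fin k) ℝ}
    (hU : Uᵀ * U = 1) : IsMP U Uᵀ := by
  refine ⟨?_, ?_, ?_, ?_⟩
  · rw [Matrix.mul_assoc, hU, Matrix.mul_one]
  · rw [hU, Matrix.one_mul]
  · rw [Matrix.transpose_mul, Matrix.transpose_transpose]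
  · rw [hU, Matrix.transpose_one]

theorem projCol_of_orthonormal {m k : ℕ} {U : Matrix (Fin m) (Fin k) ℝ} (hU : Uᵀ * U = 1) :
    projCol U = U * Uᵀ := by
  rw [projCol, (isMP_transpose_of_orthonormal hU).pinv_eq]

theorem trace_mul_transpose_of_orthonormal {m k : ℕ} {U : Matrix (Fin m) (Fin k) ℝ}
    (hU : Uᵀ * U = 1) : trace (U * Uᵀ) = k := by
  rw [trace_mul_comm, hU, trace_one, Fintype.card_fin]

theorem firstCols_orthonormal {m p k : ℕ} {U : Matrix (Fin m) (Fin p) ℝ} (hU : Uᵀ * U = 1)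
    (h : k ≤ p) : (firstCols U k h)ᵀ * firstCols U k h = 1 := by
  rw [firstCols, transpose_submatrix, ← submatrix_mul _ _ _ _ _ Function.bijective_id, hU,
    submatrix_one _ (Fin.castLE_injective h)]

namespace IsThinSVD

variable {m n p k : ℕ} {X : Matrix (Fin m) (Fin n) ℝ} {U : Matrix (Fin m) (Fin p) ℝ}
  {s : Fin p → ℝ} {V : Matrix (Fin n) (Fin p) ℝ}

theorem isMP (hX : IsThinSVD X U s V) : IsMP X (V * diagonal s⁻¹ * Uᵀ) := by
  rw [hX.2.2.2.2]
  exact (isMP_diagonal_inv s).orthonormal_mul_mul_transpose hX.1 hX.2.1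

open Finset in
theorem ne_zero_of_le_rank (hX : IsThinSVD X U s V) (h : k ≤ p) (hk : k ≤ X.rank) (j : Fin k) :
    s (Fin.castLE h j) ≠ 0 := by
  classical
  intro hj
  have hsupp : ({i | s i ≠ 0} : Finset (Fin p)) ⊆ Finset.Iio (Fin.castLE h j) := by
    intro i hi
    simp only [Finset.mem_filter, Finset.mem_univ, true_and, Finset.mem_Iio] at hi ⊢
    by_contra hle
    exact hi (le_antisymm (hj ▸ hX.2.2.1 (not_lt.mp hle)) (hX.2.2.2.1 i))
  have hrank : X.rank ≤ j := calc
    X.rank ≤ (diagonal s).rank := by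
      rw [hX.2.2.2.2]
      exact (rank_mul_le_left _ _).trans (rank_mul_le_right _ _)
    _ = #{i | s i ≠ 0} := by rw [rank_diagonal, Fintype.card_subtype]
    _ ≤ #(Finset.Iio (Fin.castLE h j)) := Finset.card_le_card hsupp
    _ = j := Fin.card_Iio _
  exact absurd (hk.trans hrank) (not_le.mpr j.2)

theorem mul_firstCols (hX : IsThinSVD X U s V) (h : k ≤ p) :
    X * firstCols V k h = firstCols U k h * diagonal (fun j => s (Fin.castLE h j)) := by
  have hXV : X * V = U * diagonal s := by rw [hX.2.2.2.2, Matrix.mul_assoc, hX.2.1, Matrix.mul_one]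
  ext i j
  have hij := congrFun (congrFun hXV i) (Fin.castLE h j)
  rw [mul_diagonal] at hij
  rw [mul_diagonal]
  exact hij

theorem diagonal_mul_diagonal_inv (hX : IsThinSVD X U s V) (h : k ≤ p) (hk : k ≤ X.rank) :
    diagonal (fun j => s (Fin.castLE h j)) * diagonal (fun j => s (Fin.castLE h j))⁻¹ = 1 := by
  rw [diagonal_mul_diagonal, ← diagonal_one]
  exact congrArg diagonal (funext fun j => mul_inv_cancel₀ (hX.ne_zero_of_le_rank h hk j))

theorem projCol_mul_firstCols (hX : IsThinSVD X U s V) (h : k ≤ p) (hk : k ≤ X.rank) :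
    projCol (X * firstCols V k h) = firstCols U k h * (firstCols U k h)ᵀ := by
  have hmp := (isMP_diagonal_inv fun j => s (Fin.castLE h j)).orthonormal_mul_mul_transpose
    (firstCols_orthonormal hX.1 h) (V := (1 : Matrix (Fin k) (Fin k) ℝ)) (by simp)
  simp only [transpose_one, Matrix.mul_one, Matrix.one_mul] at hmp
  rw [projCol, hX.mul_firstCols h, hmp.pinv_eq, Matrix.mul_assoc, ← Matrix.mul_assoc (diagonal _),
    hX.diagonal_mul_diagonal_inv h hk, Matrix.one_mul]

theorem firstCols_eq_mul (hX : IsThinSVD X U s V) (h : k ≤ p) (hk : k ≤ X.rank) :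
    firstCols U k h = X * (firstCols V k h * diagonal (fun j => s (Fin.castLE h j))⁻¹) := by
  rw [← Matrix.mul_assoc, hX.mul_firstCols h, Matrix.mul_assoc,
    hX.diagonal_mul_diagonal_inv h hk, Matrix.mul_one]

end IsThinSVD

section EuclideanNorm

variable {n : ℕ}

theorem vnorm_eq_norm_toLp (v : Fin n → ℝ) : vnorm v = ‖WithLp.toLp 2 v‖ := by
  simp [vnorm, EuclideanSpace.norm_eq]

theorem vnorm_nonneg (v : Fin n → ℝ) : 0 ≤ vnorm v := Real.sqrt_nonneg _

theorem sq_vnorm (v : Fin n → ℝ) : vnorm v ^ 2 = v ⬝ᵥ v := by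
  rw [vnorm, Real.sq_sqrt (Finset.sum_nonneg fun i _ => sq_nonneg (v i))]
  simp only [dotProduct, sq]

theorem vnorm_add_le (u v : Fin n → ℝ) : vnorm (u + v) ≤ vnorm u + vnorm v := by
  simpa only [vnorm_eq_norm_toLp, WithLp.toLp_add] using norm_add_le _ _

theorem vnorm_mulVec_le {m : ℕ} (M : Matrix (Fin m) (Fin n) ℝ) (v : Fin n → ℝ) :
    vnorm (M *ᵥ v) ≤ spec M * vnorm v := by
  simpa [vnorm_eq_norm_toLp, spec] using
    (LinearMap.toContinuousLinearMap (toEuclideanLin M)).le_opNorm (WithLp.toLp 2 v)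

theorem IsStarProjection.sq_vnorm_add_sq_vnorm_sub {P : Matrix (Fin n) (Fin n) ℝ}
    (hP : IsStarProjection P) (v : Fin n → ℝ) :
    vnorm (P *ᵥ v) ^ 2 + vnorm (P *ᵥ v - v) ^ 2 = vnorm v ^ 2 := by
  obtain ⟨hidem, hsymm⟩ := isStarProjection_iff_transpose.mp hP
  have hres : P *ᵥ (P *ᵥ v - v) = 0 := by rw [mulVec_sub, mulVec_mulVec, hidem, sub_self]
  have horth : (P *ᵥ v) ⬝ᵥ (P *ᵥ v - v) = 0 := by
    rw [dotProduct_comm, dotProduct_mulVec, ← mulVec_transpose, hsymm, hres, zero_dotProduct]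
  calc vnorm (P *ᵥ v) ^ 2 + vnorm (P *ᵥ v - v) ^ 2
      = (P *ᵥ v) ⬝ᵥ (P *ᵥ v) + (P *ᵥ v - v) ⬝ᵥ (P *ᵥ v - v) := by rw [sq_vnorm, sq_vnorm]
    _ = (P *ᵥ v - (P *ᵥ v - v)) ⬝ᵥ (P *ᵥ v - (P *ᵥ v - v)) := by
      generalize P *ᵥ v - v = w at horth ⊢
      rw [sub_dotProduct, dotProduct_sub, dotProduct_sub, horth, dotProduct_comm w (P *ᵥ v), horth]
      ring
    _ = vnorm v ^ 2 := by rw [sub_sub_cancel, sq_vnorm]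

theorem IsStarProjection.vnorm_mulVec_le {P : Matrix (Fin n) (Fin n) ℝ}
    (hP : IsStarProjection P) (v : Fin n → ℝ) : vnorm (P *ᵥ v) ≤ vnorm v :=
  le_of_pow_le_pow_left₀ two_ne_zero (vnorm_nonneg v) <| by
    nlinarith [hP.sq_vnorm_add_sq_vnorm_sub v, sq_nonneg (vnorm (P *ᵥ v - v))]

theorem IsStarProjection.vnorm_mulVec_sub_le {P : Matrix (Fin n) (Fin n) ℝ}
    (hP : IsStarProjection P) (v : Fin n → ℝ) : vnorm (P *ᵥ v - v) ≤ vnorm v :=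
  le_of_pow_le_pow_left₀ two_ne_zero (vnorm_nonneg v) <| by
    nlinarith [hP.sq_vnorm_add_sq_vnorm_sub v, sq_nonneg (vnorm (P *ᵥ v))]

theorem dotProduct_mulVec_eq_sum (G : Matrix (Fin n) (Fin n) ℝ) (x : Fin n → ℝ) :
    x ⬝ᵥ (G *ᵥ x) = ∑ j, ∑ l, G j l * (x j * x l) := by
  simp only [dotProduct, mulVec, Finset.mul_sum]
  exact Finset.sum_congr rfl fun j _ => Finset.sum_congr rfl fun l _ => by ring

theorem sq_vnorm_add_mulVec (w x : Fin n → ℝ) (M : Matrix (Fin n) (Fin n) ℝ) :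
    vnorm (w + M *ᵥ x) ^ 2 = w ⬝ᵥ w + (2 * ((Mᵀ *ᵥ w) ⬝ᵥ x) + x ⬝ᵥ ((Mᵀ * M) *ᵥ x)) := by
  rw [sq_vnorm, add_dotProduct, dotProduct_add, dotProduct_add, dotProduct_comm (M *ᵥ x) w,
    dotProduct_mulVec w, dotProduct_mulVec (M *ᵥ x), ← mulVec_transpose, ← mulVec_transpose,
    mulVec_mulVec, dotProduct_comm ((Mᵀ * M) *ᵥ x)]
  ring

end EuclideanNorm

theorem sq_vnorm_sub_le_of_spec_sub_le {n : ℕ} {P Q PA : Matrix (Fin n) (Fin n) ℝ}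
    (hP : IsStarProjection P) (hPA : IsStarProjection PA) (hPPA : P * PA = P)
    (hQPA : Q * PA = Q) {ν : ℝ} (hQP : spec (Q - P) ≤ ν) (f : Fin n → ℝ) :
    vnorm (Q *ᵥ f - PA *ᵥ f) ^ 2
      ≤ vnorm (P *ᵥ f - PA *ᵥ f) ^ 2 + (2 * ν + ν ^ 2) * vnorm f ^ 2 := by
  set g := PA *ᵥ f
  have hν : 0 ≤ ν := (norm_nonneg _).trans hQP
  have hg0 := vnorm_nonneg g
  have hf0 := vnorm_nonneg f
  have hPg : P *ᵥ f = P *ᵥ g := by rw [mulVec_mulVec, hPPA]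
  have hQg : Q *ᵥ f = Q *ᵥ g := by rw [mulVec_mulVec, hQPA]
  have hgf : vnorm g ≤ vnorm f := hPA.vnorm_mulVec_le f
  have hres : vnorm (P *ᵥ g - g) ≤ vnorm f := (hP.vnorm_mulVec_sub_le g).trans hgf
  have htri : vnorm (Q *ᵥ g - g) ≤ vnorm (P *ᵥ g - g) + ν * vnorm g := calc
    vnorm (Q *ᵥ g - g) = vnorm ((P *ᵥ g - g) + (Q - P) *ᵥ g) := by rw [sub_mulVec]; abel_nf
    _ ≤ vnorm (P *ᵥ g - g) + vnorm ((Q - P) *ᵥ g) := vnorm_add_le _ _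
    _ ≤ vnorm (P *ᵥ g - g) + spec (Q - P) * vnorm g := add_le_add le_rfl (vnorm_mulVec_le _ _)
    _ ≤ vnorm (P *ᵥ g - g) + ν * vnorm g := by gcongr
  rw [hPg, hQg]
  calc vnorm (Q *ᵥ g - g) ^ 2 ≤ (vnorm (P *ᵥ g - g) + ν * vnorm g) ^ 2 :=
        pow_le_pow_left₀ (vnorm_nonneg _) htri 2
    _ ≤ vnorm (P *ᵥ g - g) ^ 2 + (2 * ν + ν ^ 2) * vnorm f ^ 2 := by
      nlinarith [mul_le_mul_of_nonneg_left (mul_le_mul hres hgf hg0 hf0) hν,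
        mul_le_mul_of_nonneg_left (mul_le_mul hgf hgf hg0 hf0) (sq_nonneg ν)]

section Noise

open ProbabilityTheory

variable {n : ℕ} {Ω : Type*} [MeasurableSpace Ω] {μ : Measure Ω} {ξ : Ω → Fin n → ℝ} {σ2 : ℝ}

theorem integral_mul_eq_ite (hL2 : ∀ i, MemLp (fun ω => ξ ω i) 2 μ)
    (hindep : iIndepFun (fun i ω => ξ ω i) μ) (hmean : ∀ i, ∫ ω, ξ ω i ∂μ = 0)
    (hvar : ∀ i, ∫ ω, ξ ω i ^ 2 ∂μ = σ2) (j l : Fin n) :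
    ∫ ω, ξ ω j * ξ ω l ∂μ = if j = l then σ2 else 0 := by
  split_ifs with hjl
  · subst hjl
    simpa only [sq] using hvar j
  · rw [(hindep.indepFun hjl).integral_fun_mul_eq_mul_integral (hL2 j).aestronglyMeasurable
      (hL2 l).aestronglyMeasurable, hmean, zero_mul]

theorem integrable_dotProduct [IsFiniteMeasure μ] (hL2 : ∀ i, MemLp (fun ω => ξ ω i) 2 μ)
    (c : Fin n → ℝ) : Integrable (fun ω => c ⬝ᵥ ξ ω) μ :=
  integrable_finsetSum _ fun j _ => ((hL2 j).integrable one_le_two).const_mul (c j)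

theorem integrable_dotProduct_mulVec (hL2 : ∀ i, MemLp (fun ω => ξ ω i) 2 μ)
    (G : Matrix (Fin n) (Fin n) ℝ) : Integrable (fun ω => ξ ω ⬝ᵥ (G *ᵥ ξ ω)) μ := by
  simp only [dotProduct_mulVec_eq_sum]
  exact integrable_finsetSum _ fun j _ => integrable_finsetSum _ fun l _ =>
    ((hL2 j).integrable_mul (hL2 l)).const_mul (G j l)

theorem integral_dotProduct_eq_zero [IsFiniteMeasure μ] (hL2 : ∀ i, MemLp (fun ω => ξ ω i) 2 μ)
    (hmean : ∀ i, ∫ ω, ξ ω i ∂μ = 0) (c : Fin n → ℝ) : ∫ ω, c ⬝ᵥ ξ ω ∂μ = 0 := by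
  simp only [dotProduct]
  rw [integral_finsetSum _ fun j _ => ((hL2 j).integrable one_le_two).const_mul (c j)]
  simp [integral_const_mul, hmean]

theorem integral_dotProduct_mulVec (hL2 : ∀ i, MemLp (fun ω => ξ ω i) 2 μ)
    (hindep : iIndepFun (fun i ω => ξ ω i) μ) (hmean : ∀ i, ∫ ω, ξ ω i ∂μ = 0)
    (hvar : ∀ i, ∫ ω, ξ ω i ^ 2 ∂μ = σ2) (G : Matrix (Fin n) (Fin n) ℝ) :
    ∫ ω, ξ ω ⬝ᵥ (G *ᵥ ξ ω) ∂μ = trace G * σ2 := by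
  have hint : ∀ j l, Integrable (fun ω => G j l * (ξ ω j * ξ ω l)) μ := fun j l =>
    ((hL2 j).integrable_mul (hL2 l)).const_mul (G j l)
  simp only [dotProduct_mulVec_eq_sum]
  rw [integral_finsetSum _ fun j _ => integrable_finsetSum _ fun l _ => hint j l]
  simp only [integral_finsetSum _ fun l _ => hint _ l, integral_const_mul,
    integral_mul_eq_ite hL2 hindep hmean hvar]
  simp [trace, Finset.sum_mul]

theorem integral_sq_vnorm_add_mulVec [IsProbabilityMeasure μ]
    (hL2 : ∀ i, MemLp (fun ω => ξ ω i) 2 μ)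
    (hindep : iIndepFun (fun i ω => ξ ω i) μ) (hmean : ∀ i, ∫ ω, ξ ω i ∂μ = 0)
    (hvar : ∀ i, ∫ ω, ξ ω i ^ 2 ∂μ = σ2) (w : Fin n → ℝ) (M : Matrix (Fin n) (Fin n) ℝ) :
    ∫ ω, vnorm (w + M *ᵥ ξ ω) ^ 2 ∂μ = vnorm w ^ 2 + trace (Mᵀ * M) * σ2 := by
  have hlin := (integrable_dotProduct hL2 (Mᵀ *ᵥ w)).const_mul 2
  have hquad := integrable_dotProduct_mulVec hL2 (Mᵀ * M)
  simp only [sq_vnorm_add_mulVec]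
  rw [integral_add (integrable_const _) (by exact hlin.add hquad), integral_add hlin hquad,
    integral_const_mul, integral_dotProduct_eq_zero hL2 hmean,
    integral_dotProduct_mulVec hL2 hindep hmean hvar, integral_const, sq_vnorm]
  simp

theorem integral_sq_vnorm_mulVec_add_sub [IsProbabilityMeasure μ]
    (hL2 : ∀ i, MemLp (fun ω => ξ ω i) 2 μ)
    (hindep : iIndepFun (fun i ω => ξ ω i) μ) (hmean : ∀ i, ∫ ω, ξ ω i ∂μ = 0)
    (hvar : ∀ i, ∫ ω, ξ ω i ^ 2 ∂μ = σ2) (M : Matrix (Fin n) (Fin n) ℝ) (f g : Fin n → ℝ) :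
    ∫ ω, vnorm (M *ᵥ (f + ξ ω) - g) ^ 2 ∂μ = vnorm (M *ᵥ f - g) ^ 2 + trace (Mᵀ * M) * σ2 := by
  have hsplit : ∀ ω, M *ᵥ (f + ξ ω) - g = (M *ᵥ f - g) + M *ᵥ ξ ω := fun ω => by
    rw [mulVec_add]; abel
  simp only [hsplit]
  exact integral_sq_vnorm_add_mulVec hL2 hindep hmean hvar _ M

theorem integral_sq_vnorm_mulVec_add_sub_le [IsProbabilityMeasure μ]
    (hL2 : ∀ i, MemLp (fun ω => ξ ω i) 2 μ)
    (hindep : iIndepFun (fun i ω => ξ ω i) μ) (hmean : ∀ i, ∫ ω, ξ ω i ∂μ = 0)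
    (hvar : ∀ i, ∫ ω, ξ ω i ^ 2 ∂μ = σ2) {P Q PA : Matrix (Fin n) (Fin n) ℝ}
    (hP : IsStarProjection P) (hQ : IsStarProjection Q) (hPA : IsStarProjection PA)
    (hPPA : P * PA = P) (hQPA : Q * PA = Q) (htrace : trace Q = trace P) {ν : ℝ}
    (hQP : spec (Q - P) ≤ ν) (f : Fin n → ℝ) :
    ∫ ω, vnorm (Q *ᵥ (f + ξ ω) - PA *ᵥ f) ^ 2 ∂μ
      ≤ ∫ ω, vnorm (P *ᵥ (f + ξ ω) - PA *ᵥ f) ^ 2 ∂μ + (2 * ν + ν ^ 2) * vnorm f ^ 2 := by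
  rw [integral_sq_vnorm_mulVec_add_sub hL2 hindep hmean hvar,
    integral_sq_vnorm_mulVec_add_sub hL2 hindep hmean hvar, hP.transpose_mul_self,
    hQ.transpose_mul_self, htrace]
  linarith [sq_vnorm_sub_le_of_spec_sub_le hP hPA hPPA hQPA hQP f]

end Noise

open ProbabilityTheory in
theorem statement9_general
    {n d s k : ℕ}
    (A : Matrix (Fin n) (Fin d) ℝ)
    (UA : Matrix (Fin n) (Fin (min n d)) ℝ) (sA : Fin (min n d) → ℝ)
    (VA : Matrix (Fin d) (Fin (min n d)) ℝ)
    (hSVD : IsThinSVD A UA sA VA)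
    (hkrank : k ≤ A.rank) (hkp : k ≤ min n d)
    (R : Matrix (Fin d) (Fin s) ℝ)
    (hkrankAR : k ≤ (A * R).rank) (hkq : k ≤ min n s)
    (UR : Matrix (Fin n) (Fin (min n s)) ℝ) (sR : Fin (min n s) → ℝ)
    (VR : Matrix (Fin s) (Fin (min n s)) ℝ)
    (hSVDR : IsThinSVD (A * R) UR sR VR)
    (ν : ℝ)
    (hdist : d2 (firstCols UR k hkq) (firstCols UA k hkp) ≤ ν)
    -- the fixed-design statistical model
    {Ω : Type} [MeasurableSpace Ω] (μ : Measure Ω) [IsProbabilityMeasure μ]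
    (ξ : Ω → Fin n → ℝ)
    (hL2 : ∀ i, MemLp (fun ω => ξ ω i) 2 μ)
    (hindep : iIndepFun (fun i ω => ξ ω i) μ)
    (sig2 : ℝ)
    (hmean : ∀ i, ∫ ω, ξ ω i ∂μ = 0)
    (hvar : ∀ i, ∫ ω, (ξ ω i) ^ 2 ∂μ = sig2)
    (f : Fin n → ℝ) (xstar : Fin d → ℝ)
    (hxstar : A.mulVec xstar = (projCol A).mulVec f) :
    (∫ ω, vnorm (A.mulVec ((R * firstCols VR k hkq *
          pinv (A * R * firstCols VR k hkq)).mulVec (f + ξ ω))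
        - A.mulVec xstar) ^ 2 ∂μ) / (n : ℝ)
      ≤ (∫ ω, vnorm (A.mulVec ((firstCols VA k hkp *
            pinv (A * firstCols VA k hkp)).mulVec (f + ξ ω))
          - A.mulVec xstar) ^ 2 ∂μ) / (n : ℝ)
        + (2 * ν + ν ^ 2) * vnorm f ^ 2 / (n : ℝ) := by
  have hA : IsMP A (pinv A) := hSVD.isMP.isMP_pinv
  have hUA := firstCols_orthonormal hSVD.1 hkp
  have hUR := firstCols_orthonormal hSVDR.1 hkq
  have hpredA : A * (firstCols VA k hkp * pinv (A * firstCols VA k hkp))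
      = firstCols UA k hkp * (firstCols UA k hkp)ᵀ := by
    rw [← Matrix.mul_assoc]
    exact hSVD.projCol_mul_firstCols hkp hkrank
  have hpredAR : A * (R * firstCols VR k hkq * pinv (A * R * firstCols VR k hkq))
      = firstCols UR k hkq * (firstCols UR k hkq)ᵀ := by
    rw [← Matrix.mul_assoc, ← Matrix.mul_assoc]
    exact hSVDR.projCol_mul_firstCols hkq hkrankAR
  simp only [mulVec_mulVec, hpredA, hpredAR, hxstar]
  rw [← add_div]
  gcongr
  exact integral_sq_vnorm_mulVec_add_sub_le hL2 hindep hmean hvar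
    (isMP_transpose_of_orthonormal hUA).isStarProjection
    (isMP_transpose_of_orthonormal hUR).isStarProjection hA.isStarProjection
    (hA.mul_transpose_mul_eq (hSVD.firstCols_eq_mul hkp hkrank))
    (hA.mul_transpose_mul_eq (by rw [hSVDR.firstCols_eq_mul hkq hkrankAR, Matrix.mul_assoc]))
    (by rw [trace_mul_transpose_of_orthonormal hUA, trace_mul_transpose_of_orthonormal hUR])
    (by rwa [d2, projCol_of_orthonormal hUR, projCol_of_orthonormal hUA] at hdist) f

open ProbabilityTheory in
/-- Theorem: excess risk for general `R`.
In the fixed-design model, if `rank(AR) ≥ k` and `d₂(U_{AR,k}, U_{A,k}) ≤ ν < 1`, then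
`𝔈(x_{R,k}) ≤ 𝔈(x_k) + (2ν + ν²) ‖f‖² / n`. -/
theorem statement9
    {n d s k : ℕ} (hk0 : 0 < k)
    (A : Matrix (Fin n) (Fin d) ℝ)
    (UA : Matrix (Fin n) (Fin (min n d)) ℝ) (sA : Fin (min n d) → ℝ)
    (VA : Matrix (Fin d) (Fin (min n d)) ℝ)
    (hSVD : IsThinSVD A UA sA VA)
    (hkrank : k ≤ A.rank) (hkp : k ≤ min n d)
    (hgap : sv sA (k + 1) < sv sA k)
    (hks : k ≤ s) (R : Matrix (Fin d) (Fin s) ℝ)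
    (hkrankAR : k ≤ (A * R).rank) (hkq : k ≤ min n s)
    (UR : Matrix (Fin n) (Fin (min n s)) ℝ) (sR : Fin (min n s) → ℝ)
    (VR : Matrix (Fin s) (Fin (min n s)) ℝ)
    (hSVDR : IsThinSVD (A * R) UR sR VR)
    (ν : ℝ) (hν1 : ν < 1)
    (hdist : d2 (firstCols UR k hkq) (firstCols UA k hkp) ≤ ν)
    -- the fixed-design statistical model
    {Ω : Type} [MeasurableSpace Ω] (μ : Measure Ω) [IsProbabilityMeasure μ]
    (ξ : Ω → Fin n → ℝ)
    (hmeas : ∀ i, Measurable fun ω => ξ ω i)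
    (hL2 : ∀ i, MemLp (fun ω => ξ ω i) 2 μ)
    (hindep : iIndepFun (fun i ω => ξ ω i) μ)
    (sig2 : ℝ)
    (hmean : ∀ i, ∫ ω, ξ ω i ∂μ = 0)
    (hvar : ∀ i, ∫ ω, (ξ ω i) ^ 2 ∂μ = sig2)
    (f : Fin n → ℝ) (xstar : Fin d → ℝ)
    (hxstar : A.mulVec xstar = (projCol A).mulVec f) :
    (∫ ω, vnorm (A.mulVec ((R * firstCols VR k hkq *
          pinv (A * R * firstCols VR k hkq)).mulVec (f + ξ ω))
        - A.mulVec xstar) ^ 2 ∂μ) / (n : ℝ)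
      ≤ (∫ ω, vnorm (A.mulVec ((firstCols VA k hkp *
            pinv (A * firstCols VA k hkp)).mulVec (f + ξ ω))
          - A.mulVec xstar) ^ 2 ∂μ) / (n : ℝ)
        + (2 * ν + ν ^ 2) * vnorm f ^ 2 / (n : ℝ) :=
  statement9_general A UA sA VA hSVD hkrank hkp R hkrankAR hkq UR sR VR hSVDR ν hdist μ ξ hL2 hindep
    sig2 hmean hvar f xstar hxstar
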